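/- arXiv:2408.00071 — 7 statements merged into one kernel-verified Lean document; each statement's English description precedes it below -/
import Mathlib

section
/- Let H be a complex Hilbert space, let M be a unital *-subalgebra of B(H) admitting a vector Ω ∈ H that is both cyclic and separating for M, let N ⊆ M be a unital subalgebra, let E : M → M be a linear map whose range is contained in N and which satisfies E(1) = 1 and E(b a) = b E(a) for all b ∈ N and a ∈ M, and let e : H → H be a bounded linear operator with e(aΩ) = E(a)Ω for every a ∈ M. Then for every b ∈ M one has e ∘ b = b ∘ e (as operators on H) if and only if b ∈ N. -/
/-- **Characterization of the subalgebra via the Jones projection.**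
Let `H` be a complex Hilbert space, `M` a unital *-subalgebra of `B(H)` with a cyclic
and separating vector `Ω`, `N ⊆ M` a unital subalgebra, `E : M → M` a linear map with
range in `N` satisfying `E 1 = 1` and the left module property over `N`, and `e` a
bounded operator with `e (a Ω) = E a Ω` for `a ∈ M`.  Then `e` commutes with `b ∈ M`
iff `b ∈ N`. -/
theorem stmt_0
    {H : Type*} [NormedAddCommGroup H] [InnerProductSpace ℂ H] [CompleteSpace H]
    (M : StarSubalgebra ℂ (H →L[ℂ] H))
    (N : Subalgebra ℂ (H →L[ℂ] H))
    (hNM : N ≤ M.toSubalgebra)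
    (Ω : H)
    (hcyclic : Dense ((Submodule.span ℂ
      (Set.range fun a : M => (a : H →L[ℂ] H) Ω) : Submodule ℂ H) : Set H))
    (hseparating : ∀ a : M, (a : H →L[ℂ] H) Ω = 0 → a = 0)
    (E : M →ₗ[ℂ] M)
    (hrange : ∀ a : M, (↑(E a) : H →L[ℂ] H) ∈ N)
    (hunit : E 1 = 1)
    (hmod : ∀ b a : M, (↑b : H →L[ℂ] H) ∈ N → E (b * a) = b * E a)
    (e : H →L[ℂ] H)
    (he : ∀ a : M, e ((a : H →L[ℂ] H) Ω) = (↑(E a) : H →L[ℂ] H) Ω) :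
    ∀ b : M, e ∘L (b : H →L[ℂ] H) = (b : H →L[ℂ] H) ∘L e ↔ (↑b : H →L[ℂ] H) ∈ N := by
  intro b
  constructor
  · intro hcomm
    -- e Ω = Ω
    have heΩ : e Ω = Ω := by
      have := he 1
      simpa [hunit] using this
    have hbΩ : (b : H →L[ℂ] H) Ω = (↑(E b) : H →L[ℂ] H) Ω := by
      have := congrArg (fun f : H →L[ℂ] H => f Ω) hcomm
      simp only [ContinuousLinearMap.comp_apply] at this
      rw [he b] at this
      rw [heΩ] at this
      exact this.symm
    have : (↑(b - E b) : H →L[ℂ] H) Ω = 0 := by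
      have : ((↑b : H →L[ℂ] H) - ↑(E b)) Ω = 0 := by
        simp [ContinuousLinearMap.sub_apply, hbΩ]
      simpa using this
    have hb := hseparating _ this
    have : b = E b := by
      have := sub_eq_zero.mp hb
      exact this
    rw [this]
    exact hrange b
  · intro hbN
    apply ContinuousLinearMap.ext_on hcyclic
    rintro _ ⟨a, rfl⟩
    simp only [ContinuousLinearMap.comp_apply]
    have h1 : (b : H →L[ℂ] H) ((a : H →L[ℂ] H) Ω) = (↑(b * a) : H →L[ℂ] H) Ω := by
      simp
    rw [h1, he (b * a), hmod b a hbN, he a]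
    simp
end

section
/- Let H be a complex Hilbert space and let M and N be von Neumann algebras on H (unital *-subalgebras of B(H) equal to their own double commutants) with N ⊆ M. Suppose Ω ∈ H is cyclic and separating for M, E : M → M is a linear map with range contained in N satisfying E(1) = 1 and E(b a) = b E(a) for all b ∈ N and a ∈ M, and e : H → H is a bounded linear operator with e(aΩ) = E(a)Ω for all a ∈ M. Then the commutant of N equals the double commutant of the set {e} ∪ M′, i.e. N′ = ({e} ∪ M′)″. -/
/-!
Write `S = {e} ∪ M′`; it suffices to show `N = S′`. An element of `S′` lies in `M″ = M` and
commutes with `e`. For such an `x`, since `e Ω = E(1) Ω = Ω`, we get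
`x Ω = x e Ω = e x Ω = E(x) Ω`, so `x = E(x) ∈ N` because `Ω` separates `M`. Conversely, `b ∈ N`
commutes with `M′` because `N ⊆ M`, and with `e` because `e b (a Ω) = E(b a) Ω = b E(a) Ω = b e (a Ω)`
on the dense span of `M Ω`.
-/

namespace JonesProjection

variable {H : Type*} [NormedAddCommGroup H] [InnerProductSpace ℂ H] [CompleteSpace H]
  {M : VonNeumannAlgebra H} {Ω : H} {E : M.toStarSubalgebra →ₗ[ℂ] M.toStarSubalgebra}
  {e : H →L[ℂ] H}

theorem commute_of_map_mul_left
    (hcyclic : Dense ((Submodule.span ℂ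
      (Set.range fun a : M.toStarSubalgebra => (a : H →L[ℂ] H) Ω) : Submodule ℂ H) : Set H))
    (he : ∀ a : M.toStarSubalgebra, e ((a : H →L[ℂ] H) Ω) = (↑(E a) : H →L[ℂ] H) Ω)
    {c : M.toStarSubalgebra} (hc : ∀ a, E (c * a) = c * E a) :
    Commute e (c : H →L[ℂ] H) := by
  refine ContinuousLinearMap.ext_on hcyclic ?_
  rintro _ ⟨a, rfl⟩
  calc e ((c : H →L[ℂ] H) ((a : H →L[ℂ] H) Ω))
      = e (((c * a : M.toStarSubalgebra) : H →L[ℂ] H) Ω) := rfl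
    _ = (↑(E (c * a)) : H →L[ℂ] H) Ω := he _
    _ = (c : H →L[ℂ] H) ((↑(E a) : H →L[ℂ] H) Ω) := by rw [hc]; rfl
    _ = (c : H →L[ℂ] H) (e ((a : H →L[ℂ] H) Ω)) := by rw [he]

theorem map_eq_self_of_commute
    (hseparating : ∀ a : M.toStarSubalgebra, (a : H →L[ℂ] H) Ω = 0 → a = 0)
    (hunit : E 1 = 1)
    (he : ∀ a : M.toStarSubalgebra, e ((a : H →L[ℂ] H) Ω) = (↑(E a) : H →L[ℂ] H) Ω)
    {a : M.toStarSubalgebra} (ha : Commute e (a : H →L[ℂ] H)) :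
    E a = a := by
  have heΩ : e Ω = Ω := by simpa [hunit] using he 1
  refine sub_eq_zero.mp (hseparating _ ?_)
  change (↑(E a) : H →L[ℂ] H) Ω - (a : H →L[ℂ] H) Ω = 0
  have hfix : e ((a : H →L[ℂ] H) Ω) = (a : H →L[ℂ] H) Ω :=
    calc e ((a : H →L[ℂ] H) Ω) = (a : H →L[ℂ] H) (e Ω) := DFunLike.congr_fun ha.eq Ω
      _ = (a : H →L[ℂ] H) Ω := by rw [heΩ]
  rw [← he, hfix, sub_self]

theorem mem_centralizer_union_commutant_iff (M : VonNeumannAlgebra H) (e x : H →L[ℂ] H) :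
    x ∈ Set.centralizer ({e} ∪ Set.centralizer (M : Set (H →L[ℂ] H))) ↔
      x ∈ M ∧ Commute e x := by
  rw [Set.centralizer_union, M.centralizer_centralizer, Set.mem_inter_iff, and_comm]
  simp [Set.mem_centralizer_iff, Commute, SemiconjBy]

end JonesProjection

open JonesProjection in
/-- **Jones's basic construction via commutants.**
For von Neumann algebras `N ⊆ M` on `H` with a cyclic separating vector `Ω` for `M`,
a conditional-expectation-type map `E : M → M` onto `N` and the associated Jones
projection `e` (with `e (a Ω) = E a Ω`), the commutant of `N` equals the double
commutant of `{e} ∪ M′`. -/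
theorem stmt_1
    {H : Type*} [NormedAddCommGroup H] [InnerProductSpace ℂ H] [CompleteSpace H]
    (M N : VonNeumannAlgebra H)
    (hNM : (N : Set (H →L[ℂ] H)) ⊆ (M : Set (H →L[ℂ] H)))
    (Ω : H)
    (hcyclic : Dense ((Submodule.span ℂ
      (Set.range fun a : M.toStarSubalgebra => (a : H →L[ℂ] H) Ω) : Submodule ℂ H) : Set H))
    (hseparating : ∀ a : M.toStarSubalgebra, (a : H →L[ℂ] H) Ω = 0 → a = 0)
    (E : M.toStarSubalgebra →ₗ[ℂ] M.toStarSubalgebra)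
    (hrange : ∀ a : M.toStarSubalgebra, (↑(E a) : H →L[ℂ] H) ∈ N)
    (hunit : E 1 = 1)
    (hmod : ∀ b a : M.toStarSubalgebra, (↑b : H →L[ℂ] H) ∈ N → E (b * a) = b * E a)
    (e : H →L[ℂ] H)
    (he : ∀ a : M.toStarSubalgebra, e ((a : H →L[ℂ] H) Ω) = (↑(E a) : H →L[ℂ] H) Ω) :
    Set.centralizer (N : Set (H →L[ℂ] H)) =
      Set.centralizer (Set.centralizer
        ({e} ∪ Set.centralizer (M : Set (H →L[ℂ] H)))) := by
  suffices hN : (N : Set (H →L[ℂ] H)) =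
      Set.centralizer ({e} ∪ Set.centralizer (M : Set (H →L[ℂ] H))) by
    rw [hN]
  ext x
  rw [mem_centralizer_union_commutant_iff]
  constructor
  · intro hxN
    exact ⟨hNM hxN, commute_of_map_mul_left (c := ⟨x, hNM hxN⟩) hcyclic he (hmod _ · hxN)⟩
  · rintro ⟨hxM, hxe⟩
    have hEx := map_eq_self_of_commute (a := ⟨x, hxM⟩) hseparating hunit he hxe
    simpa [hEx] using hrange ⟨x, hxM⟩
end

section
/- Let H be a complex Hilbert space, let N ⊆ M ⊆ B(H) be unital *-subalgebras, let Ω ∈ H be cyclic for M, let J : H → H be an antiunitary involution satisfying J(aΩ) = a*Ω for every a ∈ M, let E : M → M be a conditional expectation from M onto N, and let e : H → H be a bounded self-adjoint operator with e(aΩ) = E(a)Ω for all a ∈ M. Then for every a ∈ M that commutes with all elements of N, one has a ∘ e = (J ∘ a* ∘ J) ∘ e and e ∘ a = e ∘ (J ∘ a* ∘ J) as operators on H. -/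
/-!
If `a, b ∈ M` commute, then `J a* J (b Ω) = J (a* b* Ω) = J J (b a Ω) = a b Ω`. Since
`e (m Ω) = E(m) Ω` with `E(m) ∈ N`, an `a` commuting with `N` satisfies `a e = J a* J e` on the
dense set `M Ω`, hence everywhere. The second identity is the adjoint of the first one for `a*`,
because `e` is self-adjoint and `(J T J)* = J T* J` for the antiunitary involution `J`.
-/

section

open ContinuousLinearMap

variable {H : Type*} [NormedAddCommGroup H] [InnerProductSpace ℂ H] [CompleteSpace H]

def antiConj (J : H →L⋆[ℂ] H) (T : H →L[ℂ] H) : H →L[ℂ] H := J.comp (T.comp J)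

omit [CompleteSpace H] in
@[simp] lemma antiConj_apply (J : H →L⋆[ℂ] H) (T : H →L[ℂ] H) (x : H) :
    antiConj J T x = J (T (J x)) := rfl

lemma star_antiConj {J : H →L⋆[ℂ] H} (hJinv : ∀ x, J (J x) = x)
    (hJinner : ∀ x y : H, (inner ℂ (J x) (J y) : ℂ) = inner ℂ y x) (T : H →L[ℂ] H) :
    star (antiConj J T) = antiConj J (star T) := by
  rw [star_eq_adjoint, eq_comm, eq_adjoint_iff]
  intro x y
  calc inner ℂ (J (star T (J x))) y = inner ℂ (J (star T (J x))) (J (J y)) := by rw [hJinv]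
    _ = inner ℂ (J y) (star T (J x)) := hJinner _ _
    _ = inner ℂ (T (J y)) (J x) := by rw [star_eq_adjoint, adjoint_inner_right]
    _ = inner ℂ (J (J x)) (J (T (J y))) := (hJinner _ _).symm
    _ = inner ℂ x (J (T (J y))) := by rw [hJinv]

variable {M : StarSubalgebra ℂ (H →L[ℂ] H)} {Ω : H} {J : H →L⋆[ℂ] H}

lemma apply_eq_antiConj_star_apply_of_commute (hJinv : ∀ x, J (J x) = x)
    (hJ : ∀ a : M, J ((a : H →L[ℂ] H) Ω) = star (a : H →L[ℂ] H) Ω) {a b : M}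
    (hab : Commute (a : H →L[ℂ] H) b) :
    (a : H →L[ℂ] H) ((b : H →L[ℂ] H) Ω) =
      antiConj J (star (a : H →L[ℂ] H)) ((b : H →L[ℂ] H) Ω) := by
  have hba :
      J (((b * a : M) : H →L[ℂ] H) Ω) = star (a : H →L[ℂ] H) (J ((b : H →L[ℂ] H) Ω)) := by
    rw [hJ, hJ, MulMemClass.coe_mul, star_mul, mul_apply_eq_comp]
  rw [antiConj_apply, ← hba, hJinv, MulMemClass.coe_mul, ← hab.eq, mul_apply_eq_comp]

variable {e : H →L[ℂ] H} {E : M → M}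

lemma mul_eq_antiConj_star_mul
    (hcyclic : Dense ((Submodule.span ℂ
      (Set.range fun a : M => (a : H →L[ℂ] H) Ω) : Submodule ℂ H) : Set H))
    (hJinv : ∀ x, J (J x) = x)
    (hJ : ∀ a : M, J ((a : H →L[ℂ] H) Ω) = star (a : H →L[ℂ] H) Ω)
    (he : ∀ a : M, e ((a : H →L[ℂ] H) Ω) = (E a : H →L[ℂ] H) Ω)
    {a : M} (hcomm : ∀ m : M, Commute (a : H →L[ℂ] H) (E m)) :
    (a : H →L[ℂ] H) * e = antiConj J (star (a : H →L[ℂ] H)) * e := by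
  refine ext_on hcyclic ?_
  rintro _ ⟨m, rfl⟩
  simp only [mul_apply_eq_comp, he]
  exact apply_eq_antiConj_star_apply_of_commute hJinv hJ (hcomm m)

lemma mul_eq_mul_antiConj_star
    (hcyclic : Dense ((Submodule.span ℂ
      (Set.range fun a : M => (a : H →L[ℂ] H) Ω) : Submodule ℂ H) : Set H))
    (hJinv : ∀ x, J (J x) = x)
    (hJinner : ∀ x y : H, (inner ℂ (J x) (J y) : ℂ) = inner ℂ y x)
    (hJ : ∀ a : M, J ((a : H →L[ℂ] H) Ω) = star (a : H →L[ℂ] H) Ω)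
    (hesa : IsSelfAdjoint e)
    (he : ∀ a : M, e ((a : H →L[ℂ] H) Ω) = (E a : H →L[ℂ] H) Ω)
    {a : M} (hcomm : ∀ m : M, Commute (star (a : H →L[ℂ] H)) (E m)) :
    e * (a : H →L[ℂ] H) = e * antiConj J (star (a : H →L[ℂ] H)) := by
  have h := mul_eq_antiConj_star_mul (a := star a) hcyclic hJinv hJ he hcomm
  apply star_injective
  rw [star_mul, star_mul, hesa.star_eq, star_antiConj hJinv hJinner, star_star]
  simpa using h

end

theorem stmt_4_general
    {H : Type*} [NormedAddCommGroup H] [InnerProductSpace ℂ H] [CompleteSpace H]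
    (M N : StarSubalgebra ℂ (H →L[ℂ] H))
    (Ω : H)
    (hcyclic : Dense ((Submodule.span ℂ
      (Set.range fun a : M => (a : H →L[ℂ] H) Ω) : Submodule ℂ H) : Set H))
    (J : H → H)
    (hJcont : Continuous J)
    (hJadd : ∀ x y : H, J (x + y) = J x + J y)
    (hJsmul : ∀ (c : ℂ) (x : H), J (c • x) = (starRingEnd ℂ c) • J x)
    (hJinv : ∀ x : H, J (J x) = x)
    (hJinner : ∀ x y : H, (inner ℂ (J x) (J y) : ℂ) = (inner ℂ y x : ℂ))
    (hJ : ∀ a : M, J ((a : H →L[ℂ] H) Ω) = (star (a : H →L[ℂ] H)) Ω)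
    (E : M →ₗ[ℂ] M)
    (hrange : ∀ a : M, (↑(E a) : H →L[ℂ] H) ∈ N)
    (e : H →L[ℂ] H)
    (hesa : IsSelfAdjoint e)
    (he : ∀ a : M, e ((a : H →L[ℂ] H) Ω) = (↑(E a) : H →L[ℂ] H) Ω) :
    ∀ a : M, (∀ b : H →L[ℂ] H, b ∈ N → (a : H →L[ℂ] H) * b = b * (a : H →L[ℂ] H)) →
      (∀ x : H, (a : H →L[ℂ] H) (e x) = J ((star (a : H →L[ℂ] H)) (J (e x)))) ∧
      (∀ x : H, e ((a : H →L[ℂ] H) x) = e (J ((star (a : H →L[ℂ] H)) (J x)))) := by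
  intro a hcomm
  let Jc : H →L⋆[ℂ] H :=
    { toFun := J, map_add' := hJadd, map_smul' := hJsmul, cont := hJcont }
  have hcommE : ∀ m : M, Commute (a : H →L[ℂ] H) (E m) := fun m => hcomm _ (hrange m)
  have hcommE_star : ∀ m : M, Commute (star (a : H →L[ℂ] H)) (E m) := fun m => by
    simpa using (Commute.star_star (hcomm _ (star_mem (hrange m))))
  have h₁ := mul_eq_antiConj_star_mul (J := Jc) hcyclic hJinv hJ he hcommE
  have h₂ :=
    mul_eq_mul_antiConj_star (J := Jc) hcyclic hJinv hJinner hJ hesa he hcommE_star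
  exact ⟨fun x => congr($h₁ x), fun x => congr($h₂ x)⟩

/-- **Entanglement property of the Jones projection.**
For `a ∈ M` commuting with all of `N`, one has `a ∘ e = (J ∘ a* ∘ J) ∘ e` and
`e ∘ a = e ∘ (J ∘ a* ∘ J)`, where `J` is the modular conjugation (an antiunitary
involution with `J (a Ω) = a* Ω`) and `e` is the Jones projection for the
conditional expectation `E : M → N`. -/
theorem stmt_4
    {H : Type*} [NormedAddCommGroup H] [InnerProductSpace ℂ H] [CompleteSpace H]
    (M N : StarSubalgebra ℂ (H →L[ℂ] H))
    (hNM : N ≤ M)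
    (Ω : H)
    (hcyclic : Dense ((Submodule.span ℂ
      (Set.range fun a : M => (a : H →L[ℂ] H) Ω) : Submodule ℂ H) : Set H))
    (J : H → H)
    (hJcont : Continuous J)
    (hJadd : ∀ x y : H, J (x + y) = J x + J y)
    (hJsmul : ∀ (c : ℂ) (x : H), J (c • x) = (starRingEnd ℂ c) • J x)
    (hJinv : ∀ x : H, J (J x) = x)
    (hJinner : ∀ x y : H, (inner ℂ (J x) (J y) : ℂ) = (inner ℂ y x : ℂ))
    (hJ : ∀ a : M, J ((a : H →L[ℂ] H) Ω) = (star (a : H →L[ℂ] H)) Ω)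
    (E : M →ₗ[ℂ] M)
    (hrange : ∀ a : M, (↑(E a) : H →L[ℂ] H) ∈ N)
    (hunit : E 1 = 1)
    (hfix : ∀ b : M, (↑b : H →L[ℂ] H) ∈ N → E b = b)
    (hbimod : ∀ b₁ a b₂ : M, (↑b₁ : H →L[ℂ] H) ∈ N → (↑b₂ : H →L[ℂ] H) ∈ N →
      E (b₁ * a * b₂) = b₁ * E a * b₂)
    (hstar : ∀ a : M, E (star a) = star (E a))
    (e : H →L[ℂ] H)
    (hesa : IsSelfAdjoint e)
    (he : ∀ a : M, e ((a : H →L[ℂ] H) Ω) = (↑(E a) : H →L[ℂ] H) Ω) :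
    ∀ a : M, (∀ b : H →L[ℂ] H, b ∈ N → (a : H →L[ℂ] H) * b = b * (a : H →L[ℂ] H)) →
      (∀ x : H, (a : H →L[ℂ] H) (e x) = J ((star (a : H →L[ℂ] H)) (J (e x)))) ∧
      (∀ x : H, e ((a : H →L[ℂ] H) x) = e (J ((star (a : H →L[ℂ] H)) (J x)))) :=
  stmt_4_general M N Ω hcyclic J hJcont hJadd hJsmul hJinv hJinner hJ E hrange e hesa he
end

section
/- Let A be a complex unital Banach algebra and let K, K′ ∈ A satisfy the commutation relation K K′ − K′ K = i·(K − K′). Then for every real number t, exp((2π t i)·K) · exp((−2π t i)·K′) = exp((i·(e^{2π t} − 1))·(K − K′)), where e^{2π t} denotes the real exponential of 2πt. -/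
/-!
With `a = i K` and `b = i K'` the hypothesis reads `a b - b a = b - a`, so `ad a` fixes `a - b`
and `exp (θ a) (a - b) = e^θ (a - b) exp (θ a)`. Hence `F θ = exp (θ a) exp (-θ b)` solves
`F' = e^θ (a - b) F`, as does `exp ((e^θ - 1) (a - b))`; the derivative of
`exp (-(e^θ - 1) (a - b)) F θ` vanishes, so this product is constantly `1`.
-/

open NormedSpace

/- Mathlib states the next two facts for `NormedAlgebra ℚ A`, an instance that is not inferred
from `NormedAlgebra ℂ A`. -/

theorem exp_add_of_commute_of_rclike (𝕂 : Type*) {A : Type*} [RCLike 𝕂] [NormedRing A]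
    [NormedAlgebra 𝕂 A] [CompleteSpace A] {x y : A} (hxy : Commute x y) :
    exp (x + y) = exp x * exp y :=
  exp_add_of_commute_of_mem_ball (𝕂 := 𝕂) hxy
    ((expSeries_radius_eq_top 𝕂 A).symm ▸ edist_lt_top _ _)
    ((expSeries_radius_eq_top 𝕂 A).symm ▸ edist_lt_top _ _)

theorem SemiconjBy.exp_right_of_rclike (𝕂 : Type*) {A : Type*} [RCLike 𝕂] [NormedRing A]
    [NormedAlgebra 𝕂 A] [CompleteSpace A] {x a b : A} (h : SemiconjBy x a b) :
    SemiconjBy x (exp a) (exp b) := by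
  rw [exp_eq_tsum 𝕂]
  exact SemiconjBy.tsum_right x (expSeries_summable' (𝕂 := 𝕂) _) (expSeries_summable' _)
    fun _ ↦ (h.pow_right _).smul_right _

section

variable {𝕂 A : Type*} [RCLike 𝕂] [NormedRing A] [NormedAlgebra 𝕂 A] [CompleteSpace A]

theorem exp_add_algebraMap (x : A) (c : 𝕂) :
    exp (x + algebraMap 𝕂 A c) = exp c • exp x := by
  rw [exp_add_of_commute_of_rclike 𝕂 (Algebra.commutes c x).symm, ← algebraMap_exp_comm,
    Algebra.algebraMap_eq_smul_one, mul_smul_one]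

theorem exp_smul_mul_of_mul_sub_mul_eq_self {a l : A} (h : a * l - l * a = l) (θ : 𝕂) :
    exp (θ • a) * l = exp θ • (l * exp (θ • a)) := by
  have hsemiconj : SemiconjBy l (θ • a + algebraMap 𝕂 A θ) (θ • a) := by
    rw [SemiconjBy, Algebra.algebraMap_eq_smul_one, mul_add, mul_smul_comm, mul_smul_comm,
      smul_mul_assoc, mul_one, ← smul_add, sub_eq_iff_eq_add'.mp h]
  rw [← (hsemiconj.exp_right_of_rclike 𝕂).eq, exp_add_algebraMap, mul_smul_comm]

theorem hasDerivAt_exp_smul_mul_exp_neg_smul {a b : A} (h : a * b - b * a = b - a) (θ : 𝕂) :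
    HasDerivAt (fun θ : 𝕂 => exp (θ • a) * exp (-θ • b))
      (exp θ • ((a - b) * (exp (θ • a) * exp (-θ • b)))) θ := by
  have hb : HasDerivAt (fun θ : 𝕂 => exp (-θ • b)) ((-1 : 𝕂) • (b * exp (-θ • b))) θ :=
    (hasDerivAt_exp_smul_const' b (-θ)).scomp θ (hasDerivAt_neg θ)
  have ha : a * (a - b) - (a - b) * a = a - b := by
    rw [mul_sub, sub_mul, ← neg_sub b a, ← h]; abel
  refine ((hasDerivAt_exp_smul_const a θ).mul hb).congr_deriv ?_
  rw [neg_one_smul, ← mul_assoc (a - b), ← smul_mul_assoc,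
    ← exp_smul_mul_of_mul_sub_mul_eq_self ha]
  noncomm_ring

theorem exp_smul_mul_exp_neg_smul_of_mul_sub_mul_eq {a b : A} (h : a * b - b * a = b - a)
    (θ : 𝕂) : exp (θ • a) * exp (-θ • b) = exp ((exp θ - 1) • (a - b)) := by
  set v := fun θ : 𝕂 => (exp θ - 1) • (a - b)
  have hv (θ : 𝕂) :
      HasDerivAt (fun θ => exp (-v θ)) (-exp θ • ((a - b) * exp (-v θ))) θ := by
    simp only [v, ← neg_smul]
    exact (hasDerivAt_exp_smul_const' (a - b) _).scomp θ (hasDerivAt_exp.sub_const 1).neg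
  have hderiv (θ : 𝕂) :
      HasDerivAt (fun θ => exp (-v θ) * (exp (θ • a) * exp (-θ • b))) 0 θ := by
    refine ((hv θ).mul (hasDerivAt_exp_smul_mul_exp_neg_smul h θ)).congr_deriv ?_
    have hcomm : Commute (a - b) (exp (-v θ)) :=
      ((Commute.refl _).smul_right _).neg_right.exp_right
    rw [mul_smul_comm, smul_mul_assoc, ← mul_assoc, hcomm.eq, neg_smul]
    simp only [mul_assoc, neg_add_cancel]
  have hconst : exp (-v θ) * (exp (θ • a) * exp (-θ • b)) = 1 := by
    rw [is_const_of_deriv_eq_zero (fun θ => (hderiv θ).differentiableAt)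
      (fun θ => (hderiv θ).deriv) θ 0]
    simp [v]
  have hinv : exp (v θ) * exp (-v θ) = 1 := by
    rw [← exp_add_of_commute_of_rclike 𝕂 (Commute.refl _).neg_right, add_neg_cancel, exp_zero]
  calc exp (θ • a) * exp (-θ • b)
      = exp (v θ) * exp (-v θ) * (exp (θ • a) * exp (-θ • b)) := by rw [hinv, one_mul]
    _ = exp (v θ) := by rw [mul_assoc, hconst, mul_one]

end

/-- If `K K′ − K′ K = i (K − K′)` in a complex unital Banach algebra, then for all
real `t`, `exp(2πti·K) exp(−2πti·K′) = exp(i(e^{2πt} − 1)(K − K′))`. -/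
theorem stmt_8
    {A : Type*} [NormedRing A] [NormedAlgebra ℂ A] [CompleteSpace A]
    (K K' : A)
    (hcomm : K * K' - K' * K = Complex.I • (K - K')) :
    ∀ t : ℝ,
      exp ((((2 * Real.pi * t : ℝ) : ℂ) * Complex.I) • K) *
          exp ((-((2 * Real.pi * t : ℝ) : ℂ) * Complex.I) • K') =
        exp ((Complex.I * (((Real.exp (2 * Real.pi * t) : ℝ) : ℂ) - 1)) • (K - K')) := by
  intro t
  have h : (Complex.I • K) * (Complex.I • K') - (Complex.I • K') * (Complex.I • K) =
      Complex.I • K' - Complex.I • K := by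
    rw [smul_mul_smul_comm, smul_mul_smul_comm, ← smul_sub, hcomm, smul_smul,
      Complex.I_mul_I, neg_one_mul, neg_smul, ← smul_neg, neg_sub, smul_sub]
  have := exp_smul_mul_exp_neg_smul_of_mul_sub_mul_eq h ((2 * Real.pi * t : ℝ) : ℂ)
  rwa [smul_smul, smul_smul, ← smul_sub, smul_smul, ← Complex.exp_eq_exp_ℂ,
    ← Complex.ofReal_exp, mul_comm (_ - 1) Complex.I] at this
end

section
/- Let m, n be positive integers and let V = Matrix (Fin m × Fin n) (Fin m × Fin n) ℂ, viewed as a ℂ-vector space. For x ∈ V let Lₓ, Rₓ : V → V denote the linear maps of left and right multiplication by x, and let T : V → V be the linear map T(v) = E(v) ⊗ₖ 1ₙ, where E is the normalized partial trace E(v) i j = (1/n) ∑ₖ v (i,k) (j,k). Then the unital ℂ-subalgebra of the endomorphism algebra End(V) generated by the set {Lₓ : x ∈ V} ∪ {T} equals the centralizer in End(V) of the set {R_{c ⊗ₖ 1ₙ} : c : Matrix (Fin m) (Fin m) ℂ}. -/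
/-!
Write `P v = Tr_κ v ⊗ₖ 1` for the unnormalized Jones projection, so that `T = n⁻¹ • P`. Left
multiplications commute with right multiplications, and `P` commutes with right multiplication
by `c ⊗ₖ 1` because the partial trace is right `N`-linear; this gives `⊆`.

For `⊇`, the matrix units `e_{q,(j₀,δ)}` form a Pimsner–Popa basis for `P`:
`v = ∑ e_{q,(j₀,δ)} · P (e_{(j₀,δ),q} · v)`. Since `P` takes values in `N = {c ⊗ₖ 1}`, an `F`
commuting with the right action of `N` satisfies `F (w · P u) = F w · P u`, hence
`F = ∑ L_{F e_{q,(j₀,δ)}} ∘ P ∘ L_{e_{(j₀,δ),q}}`, which lies in the algebra generated by the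
`L_x` and `T`.
-/

open Matrix Kronecker

namespace Matrix

variable {ι κ R : Type*} [Fintype κ] [CommSemiring R]

def partialTrace : Matrix (ι × κ) (ι × κ) R →ₗ[R] Matrix ι ι R where
  toFun v := of fun i j => ∑ k, v (i, k) (j, k)
  map_add' v w := by ext; simp [Finset.sum_add_distrib]
  map_smul' r v := by ext; simp [Finset.mul_sum]

theorem partialTrace_apply (v : Matrix (ι × κ) (ι × κ) R) (i j : ι) :
    partialTrace v i j = ∑ k, v (i, k) (j, k) := rfl

theorem partialTrace_mul_kronecker_one [Fintype ι] [DecidableEq κ]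
    (v : Matrix (ι × κ) (ι × κ) R) (c : Matrix ι ι R) :
    partialTrace (v * (c ⊗ₖ (1 : Matrix κ κ R))) = partialTrace v * c := by
  ext i j
  simp only [partialTrace_apply, mul_apply, kroneckerMap_apply, one_apply, mul_ite, mul_one,
    mul_zero, Fintype.sum_prod_type, Finset.sum_ite_eq', Finset.mem_univ, ↓reduceIte,
    Finset.sum_mul]
  rw [Finset.sum_comm]

theorem partialTrace_single_mul_apply [Fintype ι] [DecidableEq ι] [DecidableEq κ]
    (x : ι) (δ : κ) (q : ι × κ) (v : Matrix (ι × κ) (ι × κ) R) (a b : ι) :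
    partialTrace (single (x, δ) q 1 * v) a b = if x = a then v q (b, δ) else 0 := by
  simp [partialTrace_apply, mul_apply, single_apply, ite_and]

variable [DecidableEq κ]

def partialTraceKronOne : Module.End R (Matrix (ι × κ) (ι × κ) R) where
  toFun v := partialTrace v ⊗ₖ (1 : Matrix κ κ R)
  map_add' v w := by simp [add_kronecker]
  map_smul' r v := by simp [smul_kronecker]

theorem partialTraceKronOne_apply (v : Matrix (ι × κ) (ι × κ) R) :
    partialTraceKronOne v = partialTrace v ⊗ₖ (1 : Matrix κ κ R) := rfl

theorem partialTraceKronOne_mul_kronecker_one [Fintype ι]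
    (v : Matrix (ι × κ) (ι × κ) R) (c : Matrix ι ι R) :
    partialTraceKronOne (v * (c ⊗ₖ (1 : Matrix κ κ R))) = partialTraceKronOne v * (c ⊗ₖ 1) := by
  rw [partialTraceKronOne_apply, partialTraceKronOne_apply, partialTrace_mul_kronecker_one,
    ← mul_kronecker_mul, one_mul]

theorem sum_single_mul_partialTraceKronOne [Fintype ι] [DecidableEq ι] (j₀ : ι)
    (v : Matrix (ι × κ) (ι × κ) R) :
    ∑ q, ∑ δ, single q (j₀, δ) 1 * partialTraceKronOne (single (j₀, δ) q 1 * v) = v := by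
  ext ⟨i, α⟩ ⟨j, β⟩
  simp [partialTraceKronOne_apply, partialTrace_single_mul_apply, Matrix.sum_apply, mul_apply,
    single_apply, one_apply, Fintype.sum_prod_type, ite_and]

section Centralizer

variable [Fintype ι] [DecidableEq ι]

theorem partialTraceKronOne_mem_centralizer :
    partialTraceKronOne ∈ Subalgebra.centralizer R (Set.range fun c : Matrix ι ι R =>
      LinearMap.mulRight R (c ⊗ₖ (1 : Matrix κ κ R))) := by
  rintro _ ⟨c, rfl⟩
  ext1 v
  exact (partialTraceKronOne_mul_kronecker_one v c).symm

theorem apply_mul_partialTraceKronOne_of_mem_centralizer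
    {F : Module.End R (Matrix (ι × κ) (ι × κ) R)}
    (hF : F ∈ Subalgebra.centralizer R (Set.range fun c : Matrix ι ι R =>
      LinearMap.mulRight R (c ⊗ₖ (1 : Matrix κ κ R)))) (w u : Matrix (ι × κ) (ι × κ) R) :
    F w * partialTraceKronOne u = F (w * partialTraceKronOne u) :=
  LinearMap.congr_fun (hF _ ⟨partialTrace u, rfl⟩) w

theorem eq_sum_mulLeft_mul_partialTraceKronOne_of_mem_centralizer (j₀ : ι)
    {F : Module.End R (Matrix (ι × κ) (ι × κ) R)}
    (hF : F ∈ Subalgebra.centralizer R (Set.range fun c : Matrix ι ι R =>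
      LinearMap.mulRight R (c ⊗ₖ (1 : Matrix κ κ R)))) :
    F = ∑ q, ∑ δ, LinearMap.mulLeft R (F (single q (j₀, δ) 1)) * partialTraceKronOne *
      LinearMap.mulLeft R (single (j₀, δ) q 1) := by
  ext1 v
  conv_lhs => rw [← sum_single_mul_partialTraceKronOne j₀ v]
  simp [map_sum, apply_mul_partialTraceKronOne_of_mem_centralizer hF, mul_assoc]

end Centralizer

theorem adjoin_mulLeft_union_smul_partialTraceKronOne {K : Type*} [Field K] [Fintype ι]
    [DecidableEq ι] [Nonempty ι] {r : K} (hr : r ≠ 0) :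
    Algebra.adjoin K (Set.range (LinearMap.mulLeft K (A := Matrix (ι × κ) (ι × κ) K)) ∪
      {r • partialTraceKronOne}) =
      Subalgebra.centralizer K (Set.range fun c : Matrix ι ι K =>
        LinearMap.mulRight K (c ⊗ₖ (1 : Matrix κ κ K))) := by
  set S := Set.range (LinearMap.mulLeft K (A := Matrix (ι × κ) (ι × κ) K)) ∪
    {r • partialTraceKronOne}
  apply le_antisymm
  · rw [Algebra.adjoin_le_iff]
    rintro _ (⟨x, rfl⟩ | rfl)
    · rintro _ ⟨c, rfl⟩
      exact (LinearMap.commute_mulLeft_right x _).symm.eq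
    · exact Subalgebra.smul_mem _ partialTraceKronOne_mem_centralizer r
  · intro F hF
    have hL (x : Matrix (ι × κ) (ι × κ) K) : LinearMap.mulLeft K x ∈ Algebra.adjoin K S :=
      Algebra.subset_adjoin (Or.inl ⟨x, rfl⟩)
    have hP : partialTraceKronOne ∈ Algebra.adjoin K S := by
      have hrP : r • partialTraceKronOne ∈ Algebra.adjoin K S :=
        Algebra.subset_adjoin (Or.inr rfl)
      simpa [hr] using Subalgebra.smul_mem _ hrP r⁻¹
    rw [eq_sum_mulLeft_mul_partialTraceKronOne_of_mem_centralizer (Classical.arbitrary ι) hF]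
    exact sum_mem fun q _ => sum_mem fun δ _ => mul_mem (mul_mem (hL _) hP) (hL _)

end Matrix

/-- **Jones's basic construction (type I model).**
The unital algebra generated by the left-multiplication operators `Lₓ` (for all `x` in
`M = Matrix (Fin m × Fin n) (Fin m × Fin n) ℂ`) together with the Jones projection
`T(v) = E(v) ⊗ₖ 1ₙ` equals the centralizer of the right multiplications by the
subalgebra `N = {c ⊗ₖ 1ₙ}`. -/
theorem stmt_16
    (m n : ℕ) (hm : 0 < m) (hn : 0 < n)
    (E : Matrix (Fin m × Fin n) (Fin m × Fin n) ℂ → Matrix (Fin m) (Fin m) ℂ)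
    (hE : ∀ (v : Matrix (Fin m × Fin n) (Fin m × Fin n) ℂ) (i j : Fin m),
      E v i j = (1 / (n : ℂ)) * ∑ k : Fin n, v (i, k) (j, k))
    (T : Module.End ℂ (Matrix (Fin m × Fin n) (Fin m × Fin n) ℂ))
    (hT : ∀ v : Matrix (Fin m × Fin n) (Fin m × Fin n) ℂ,
      T v = E v ⊗ₖ (1 : Matrix (Fin n) (Fin n) ℂ)) :
    Algebra.adjoin ℂ
        ((Set.range fun x : Matrix (Fin m × Fin n) (Fin m × Fin n) ℂ =>
          (LinearMap.mulLeft ℂ x :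
            Module.End ℂ (Matrix (Fin m × Fin n) (Fin m × Fin n) ℂ))) ∪ {T}) =
      Subalgebra.centralizer ℂ
        (Set.range fun c : Matrix (Fin m) (Fin m) ℂ =>
          (LinearMap.mulRight ℂ (c ⊗ₖ (1 : Matrix (Fin n) (Fin n) ℂ)) :
            Module.End ℂ (Matrix (Fin m × Fin n) (Fin m × Fin n) ℂ))) := by
  have : Nonempty (Fin m) := Fin.pos_iff_nonempty.mp hm
  have hTP : T = (1 / (n : ℂ)) • partialTraceKronOne := by
    ext1 v
    have hEP : E v = (1 / (n : ℂ)) • partialTrace v := by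
      ext i j
      exact hE v i j
    rw [hT, hEP, LinearMap.smul_apply, partialTraceKronOne_apply, smul_kronecker]
  rw [hTP]
  exact adjoin_mulLeft_union_smul_partialTraceKronOne (by simp [hn.ne'])
end

section
/- Let m, n be positive integers, let V = Matrix (Fin m × Fin n) (Fin m × Fin n) ℂ, let T : V → V be the linear map T(v) = E(v) ⊗ₖ 1ₙ with E the normalized partial trace E(v) i j = (1/n) ∑ₖ v (i,k) (j,k), and for a ∈ V let Lₐ : V → V be left multiplication by a. Then the trace of the linear endomorphism Lₐ ∘ T of V equals (m/n)·trace(a), where trace(a) is the matrix trace of a. (Dividing both sides by dim V = (mn)² gives the type I instance of the Jones relation tr_{M₁}(e_N a) = [M:N]⁻¹ tr_M(a) with index [M:N] = n².) -/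
/-!
Write `P` for the partial trace over the second tensor factor and `J x = x ⊗ₖ 1`, so that
`T = (1/n) • J ∘ P`. Since `P (a * (x ⊗ₖ 1)) = P a * x`, cyclicity of the trace gives
`tr (Lₐ ∘ J ∘ P) = tr (P ∘ Lₐ ∘ J) = tr (L_{P a}) = m · tr (P a) = m · tr a`.
-/

open Matrix Kronecker

namespace Matrix

variable {ι κ R : Type*}

theorem stdBasis_repr_apply [Fintype ι] [Fintype κ] [Semiring R] (v : Matrix ι κ R)
    (p : ι × κ) : (stdBasis R ι κ).repr v p = v p.1 p.2 := by
  simp [stdBasis, ofLinearEquiv]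

section CommSemiring

variable [CommSemiring R]

variable (κ R) in
def kroneckerOneRight [DecidableEq κ] : Matrix ι ι R →ₗ[R] Matrix (ι × κ) (ι × κ) R :=
  (kroneckerBilinear (R := R) (α := R)).flip 1

@[simp]
theorem kroneckerOneRight_apply [DecidableEq κ] (x : Matrix ι ι R) :
    kroneckerOneRight κ R x = x ⊗ₖ 1 := rfl

variable [Fintype κ]

def partialTraceRight : Matrix (ι × κ) (ι × κ) R →ₗ[R] Matrix ι ι R where
  toFun v := of fun i j => ∑ k, v (i, k) (j, k)
  map_add' v w := by ext; simp [Finset.sum_add_distrib]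
  map_smul' c v := by ext; simp [Finset.mul_sum]

@[simp]
theorem partialTraceRight_apply (v : Matrix (ι × κ) (ι × κ) R) (i j : ι) :
    partialTraceRight v i j = ∑ k, v (i, k) (j, k) := rfl

variable [Fintype ι]

theorem trace_partialTraceRight (v : Matrix (ι × κ) (ι × κ) R) :
    trace (partialTraceRight v) = trace v := by
  simp [trace, Fintype.sum_prod_type]

theorem partialTraceRight_mul_kronecker_one [DecidableEq κ]
    (a : Matrix (ι × κ) (ι × κ) R) (x : Matrix ι ι R) :
    partialTraceRight (a * (x ⊗ₖ (1 : Matrix κ κ R))) = partialTraceRight a * x := by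
  ext i j
  simp only [partialTraceRight_apply, mul_apply, Fintype.sum_prod_type, kroneckerMap_apply,
    one_apply, mul_ite, mul_one, mul_zero, Finset.sum_ite_eq', Finset.mem_univ, if_true,
    Finset.sum_mul]
  exact Finset.sum_comm

end CommSemiring

variable [Fintype ι] [CommRing R]

theorem trace_mulLeft [DecidableEq ι] (b : Matrix ι ι R) :
    LinearMap.trace R (Matrix ι ι R) (LinearMap.mulLeft R b) = Fintype.card ι • trace b := by
  rw [LinearMap.trace_eq_matrix_trace R (stdBasis R ι ι), trace, Fintype.sum_prod_type]
  simp only [diag_apply, LinearMap.toMatrix_apply, stdBasis_eq_single, LinearMap.mulLeft_apply,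
    stdBasis_repr_apply, mul_single_apply_same, mul_one, Finset.sum_const, Finset.card_univ]
  exact (Finset.smul_sum ..).symm

theorem trace_mulLeft_comp_kroneckerOneRight_comp_partialTraceRight [Fintype κ]
    [DecidableEq ι] [DecidableEq κ] (a : Matrix (ι × κ) (ι × κ) R) :
    LinearMap.trace R _ (LinearMap.mulLeft R a ∘ₗ kroneckerOneRight κ R ∘ₗ partialTraceRight) =
      Fintype.card ι • trace a := by
  have h : partialTraceRight ∘ₗ LinearMap.mulLeft R a ∘ₗ kroneckerOneRight κ R =
      LinearMap.mulLeft R (partialTraceRight a) :=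
    LinearMap.ext fun x => partialTraceRight_mul_kronecker_one a x
  rw [← LinearMap.comp_assoc, LinearMap.trace_comp_comm', h, trace_mulLeft,
    trace_partialTraceRight]

end Matrix

theorem stmt_17_general
    (m n : ℕ)
    (E : Matrix (Fin m × Fin n) (Fin m × Fin n) ℂ → Matrix (Fin m) (Fin m) ℂ)
    (hE : ∀ (v : Matrix (Fin m × Fin n) (Fin m × Fin n) ℂ) (i j : Fin m),
      E v i j = (1 / (n : ℂ)) * ∑ k : Fin n, v (i, k) (j, k))
    (T : Module.End ℂ (Matrix (Fin m × Fin n) (Fin m × Fin n) ℂ))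
    (hT : ∀ v : Matrix (Fin m × Fin n) (Fin m × Fin n) ℂ,
      T v = E v ⊗ₖ (1 : Matrix (Fin n) (Fin n) ℂ))
    (a : Matrix (Fin m × Fin n) (Fin m × Fin n) ℂ) :
    LinearMap.trace ℂ (Matrix (Fin m × Fin n) (Fin m × Fin n) ℂ)
        ((LinearMap.mulLeft ℂ a :
          Module.End ℂ (Matrix (Fin m × Fin n) (Fin m × Fin n) ℂ)) ∘ₗ T) =
      ((m : ℂ) / (n : ℂ)) * a.trace := by
  have hT' : T = (1 / (n : ℂ)) • (kroneckerOneRight (Fin n) ℂ ∘ₗ partialTraceRight) := by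
    ext1 v
    have hEv : E v = (1 / (n : ℂ)) • partialTraceRight v := by
      ext i j
      simp [hE]
    rw [hT, hEv, smul_kronecker]
    rfl
  rw [hT', LinearMap.comp_smul, map_smul,
    trace_mulLeft_comp_kroneckerOneRight_comp_partialTraceRight, Fintype.card_fin, nsmul_eq_mul,
    smul_eq_mul]
  ring

/-- **The Jones trace relation (type I model).**
With `T(v) = E(v) ⊗ₖ 1ₙ` the Jones projection and `Lₐ` left multiplication by `a`,
the trace of the endomorphism `Lₐ ∘ T` of `V = Matrix (Fin m × Fin n) (Fin m × Fin n) ℂ`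
equals `(m/n) · trace a`. -/
theorem stmt_17
    (m n : ℕ) (hm : 0 < m) (hn : 0 < n)
    (E : Matrix (Fin m × Fin n) (Fin m × Fin n) ℂ → Matrix (Fin m) (Fin m) ℂ)
    (hE : ∀ (v : Matrix (Fin m × Fin n) (Fin m × Fin n) ℂ) (i j : Fin m),
      E v i j = (1 / (n : ℂ)) * ∑ k : Fin n, v (i, k) (j, k))
    (T : Module.End ℂ (Matrix (Fin m × Fin n) (Fin m × Fin n) ℂ))
    (hT : ∀ v : Matrix (Fin m × Fin n) (Fin m × Fin n) ℂ,
      T v = E v ⊗ₖ (1 : Matrix (Fin n) (Fin n) ℂ))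
    (a : Matrix (Fin m × Fin n) (Fin m × Fin n) ℂ) :
    LinearMap.trace ℂ (Matrix (Fin m × Fin n) (Fin m × Fin n) ℂ)
        ((LinearMap.mulLeft ℂ a :
          Module.End ℂ (Matrix (Fin m × Fin n) (Fin m × Fin n) ℂ)) ∘ₗ T) =
      ((m : ℂ) / (n : ℂ)) * a.trace :=
  stmt_17_general m n E hE T hT a
end

section
/- Let n, d be positive integers, let ξ, a : Matrix (Fin d) (Fin d) ℂ, and let I = Fin n × Fin d × Fin d. Define w : I × I → ℂ by w((i,α,β),(j,γ,δ)) = ξ γ δ if i = j and α = β, and w = 0 otherwise. Define the linear operator Γₐ on functions I × I → ℂ acting on the last index by (Γₐ v)((i,α,β),(j,γ,δ)) = ∑_{β′} a β′ δ · v((i,α,β),(j,γ,β′)). Then ∑_{p,q ∈ I} conj(w(p,q)) · (Γₐ w)(p,q) = n·d·trace(a * ξᴴ * ξ), where ξᴴ is the conjugate transpose of ξ. (This is the microscopic recovery identity: the expectation value of the canonically shifted operator Γ(a) in the projected state e_N|ξ⟩ reproduces, up to normalization, the trace tr_A(a ξ† ξ) encoding the correlation functions of the diary.) -/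
open Matrix

/-- **The microscopic recovery identity.**
With `w` the projected state `e_N|ξ⟩` and `Γₐ` the canonically shifted operator
acting on the outgoing-radiation factor, the expectation value
`∑ₚ ∑_q conj(w(p,q)) (Γₐ w)(p,q)` equals `n·d·trace(a ξᴴ ξ)`. -/
theorem stmt_18
    (n d : ℕ) (hn : 0 < n) (hd : 0 < d)
    (ξ a : Matrix (Fin d) (Fin d) ℂ)
    (w : (Fin n × Fin d × Fin d) × (Fin n × Fin d × Fin d) → ℂ)
    (hw : ∀ (i j : Fin n) (α β γ δ : Fin d),
      w ((i, α, β), (j, γ, δ)) = if i = j ∧ α = β then ξ γ δ else 0)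
    (Γa : ((Fin n × Fin d × Fin d) × (Fin n × Fin d × Fin d) → ℂ) →
      ((Fin n × Fin d × Fin d) × (Fin n × Fin d × Fin d) → ℂ))
    (hΓa : ∀ (v : (Fin n × Fin d × Fin d) × (Fin n × Fin d × Fin d) → ℂ)
        (i j : Fin n) (α β γ δ : Fin d),
      Γa v ((i, α, β), (j, γ, δ)) = ∑ β' : Fin d, a β' δ * v ((i, α, β), (j, γ, β'))) :
    ∑ p : Fin n × Fin d × Fin d, ∑ q : Fin n × Fin d × Fin d,
        (starRingEnd ℂ) (w (p, q)) * Γa w (p, q) =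
      ((n : ℂ) * (d : ℂ)) * (a * ξᴴ * ξ).trace := by
  simp only [Fintype.sum_prod_type, hw, hΓa]
  simp only [apply_ite (starRingEnd ℂ), map_zero, ite_mul, zero_mul, mul_ite, mul_zero,
    Finset.sum_ite_eq', Finset.mem_univ, if_true]
  simp [Matrix.trace, Matrix.mul_apply, Matrix.diag, Finset.mul_sum, Finset.sum_mul,
    conjTranspose_apply]
  rw [Finset.sum_comm]
  ring_nf
  have key : ∀ (c : Prop) [Decidable c] (x : ℂ),
      (if c then if c then x else 0 else 0) = if c then x else 0 := by
    intro c _ x; split <;> simp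
  simp only [key, ite_and, Finset.sum_ite_eq, Finset.sum_ite_eq', Finset.mem_univ, if_true,
    Finset.sum_const, Finset.card_univ, Fintype.card_fin, nsmul_eq_mul, Finset.mul_sum]
  have cyc : ∀ f : Fin d → Fin d → Fin d → ℂ,
      (∑ x : Fin d, ∑ y : Fin d, ∑ z : Fin d, f y z x) =
        ∑ x : Fin d, ∑ y : Fin d, ∑ z : Fin d, f x y z := by
    intro f
    rw [Finset.sum_comm]
    exact Finset.sum_congr rfl fun y _ => Finset.sum_comm
  set f : Fin d → Fin d → Fin d → ℂ :=
    fun x y z => (starRingEnd ℂ) (ξ x y) * a z y * ξ x z with hf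
  calc (∑ x : Fin d, ∑ x_1 : Fin d, ∑ i : Fin d,
        (d : ℂ) * ((n : ℂ) * ((starRingEnd ℂ) (ξ x x_1) * a i x_1 * ξ x i)))
      = ∑ x : Fin d, ∑ y : Fin d, ∑ z : Fin d, (n : ℂ) * (d : ℂ) * f x y z := by
        refine Finset.sum_congr rfl fun x _ => Finset.sum_congr rfl fun y _ =>
          Finset.sum_congr rfl fun z _ => by rw [hf]; ring
    _ = ∑ x : Fin d, ∑ y : Fin d, ∑ z : Fin d, (n : ℂ) * (d : ℂ) * f y z x :=
        (cyc fun x y z => (n : ℂ) * (d : ℂ) * f x y z).symm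
    _ = _ := by
        refine Finset.sum_congr rfl fun x _ => Finset.sum_congr rfl fun y _ =>
          Finset.sum_congr rfl fun z _ => by rw [hf]; ring
end
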